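/- If F is a hypergraph containing either (i) an edge with at least 3 vertices, or (ii) two separated two-element edges (edges E_1, E_2 with max E_1 < min E_2), or (iii) a path ({a,b},{b,c}) with a < b < c among its two-element edges, or (iv) a repeated two-element edge, then ex_e(F,n) ≥ floor(n/2)·ceil(n/2), witnessed by the complete bipartite ordered graph with parts [floor(n/2)] and [floor(n/2)+1, n]. -/

import Mathlib

/-- The set of vertices of a hypergraph given as a list of finite edges. -/
def vset (H : List (Finset ℕ)) : Finset ℕ := H.foldr (· ∪ ·) ∅

/-- The number of vertices `v(H)`. -/
def nv (H : List (Finset ℕ)) : ℕ := (vset H).card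

/-- The weight `i(H)`, the number of vertex-edge incidences. -/
def iw (H : List (Finset ℕ)) : ℕ := (H.map Finset.card).sum

/-- A hypergraph is simple if its edges are distinct (and nonempty). -/
def HSimple (H : List (Finset ℕ)) : Prop := H.Nodup ∧ ∀ E ∈ H, E.Nonempty

/-- Ordered hypergraph containment: an increasing vertex injection together with an
injective assignment of edges such that each edge of `F` maps vertex-wise into its image. -/
def HContains (H F : List (Finset ℕ)) : Prop :=
  ∃ (φ : ℕ → ℕ) (f : Fin F.length → Fin H.length),
    StrictMono φ ∧ Function.Injective f ∧
      ∀ i : Fin F.length, ∀ v ∈ F.get i, φ v ∈ H.get (f i)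

/-- `ex_e(F,n)`: max number of edges of a simple `F`-free hypergraph on at most `n` vertices. -/
noncomputable def exE (F : List (Finset ℕ)) (n : ℕ) : ℕ :=
  sSup {m | ∃ H, HSimple H ∧ ¬ HContains H F ∧ nv H ≤ n ∧ H.length = m}

/-- `ex_i(F,n)`: max weight of a simple `F`-free hypergraph on at most `n` vertices. -/
noncomputable def exI (F : List (Finset ℕ)) (n : ℕ) : ℕ :=
  sSup {m | ∃ H, HSimple H ∧ ¬ HContains H F ∧ nv H ≤ n ∧ iw H = m}

/-- A hypergraph is a graph if all edges have two vertices. -/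
def IsGraphH (H : List (Finset ℕ)) : Prop := ∀ E ∈ H, E.card = 2

/-- `gex(B,n)` for a family `B` of ordered graphs. -/
noncomputable def gexSet (B : Set (List (Finset ℕ))) (n : ℕ) : ℕ :=
  sSup {m | ∃ G, HSimple G ∧ IsGraphH G ∧ (∀ F ∈ B, ¬ HContains G F) ∧ nv G ≤ n ∧ G.length = m}

/-- `gex(F,n)` for a single ordered graph. -/
noncomputable def gex (F : List (Finset ℕ)) (n : ℕ) : ℕ := gexSet {F} n

/-- `G'` is a `k`-blow-up of `G`: every edge colouring of `G'` using each colour at most `k`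
times admits an ordered copy of `G` with pairwise distinct colours. -/
def IsBlowup (k : ℕ) (G' G : List (Finset ℕ)) : Prop :=
  ∀ χ : Fin G'.length → ℕ,
    (∀ c : ℕ, (Finset.univ.filter fun i => χ i = c).card ≤ k) →
    ∃ (φ : ℕ → ℕ) (f : Fin G.length → Fin G'.length),
      StrictMono φ ∧ Function.Injective f ∧
      (∀ i : Fin G.length, ∀ v ∈ G.get i, φ v ∈ G'.get (f i)) ∧
      Function.Injective (χ ∘ f)

/-- The hierarchy `F_1(n) = 2n`, `F_{i+1}(n) = F_i iterated n times starting at 1`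
(indexed from 0, so `Fiter i = F_{i+1}`). -/
def Fiter : ℕ → ℕ → ℕ
  | 0, n => 2 * n
  | i+1, n => (Fiter i)^[n] 1

/-- The Ackermann function `A(n) = F_n(n)`. -/
def Ack (n : ℕ) : ℕ := Fiter (n - 1) n

/-- The inverse Ackermann function `α(n) = min {m : A(m) ≥ n}`. -/
noncomputable def invAck (n : ℕ) : ℕ := sInf {m | n ≤ Ack m}

/-- The almost constant factor `β(k,l,n)` from the generalized Davenport–Schinzel bound. -/
noncomputable def DSbeta (k l n : ℕ) : ℕ :=
  k * 2 ^ (k * l - 3) * (10 * k) ^ (2 * (invAck n) ^ (k * l - 4) + 8 * (invAck n) ^ (k * l - 5))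

/-- The ordered graph `G_1 = ({1,3},{1,5},{2,3},{2,4})`. -/
def G1 : List (Finset ℕ) := [{1,3}, {1,5}, {2,3}, {2,4}]

/-- A `k`-multiple of `G_1`. -/
def IsMultiple (k : ℕ) (G : List (Finset ℕ)) : Prop :=
  HSimple G ∧ IsGraphH G ∧
  ∃ (A B C : Finset ℕ) (v : ℕ),
    A.card = k ∧ (∀ a ∈ A, a < v) ∧ (∀ b ∈ B, v < b) ∧
    (∀ b ∈ B, ∀ c ∈ C, b < c) ∧
    vset G = A ∪ {v} ∪ B ∪ C ∧
    (∀ a ∈ A, ({a, v} : Finset ℕ) ∈ G) ∧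
    (∀ a ∈ A, (B.filter fun b => ({a, b} : Finset ℕ) ∈ G).card = k) ∧
    (∀ a ∈ A, (C.filter fun c => ({a, c} : Finset ℕ) ∈ G).card = k) ∧
    (∀ E ∈ G, (∃ a ∈ A, E = {a, v}) ∨ (∃ a ∈ A, ∃ w ∈ B ∪ C, E = {a, w}))


/-!
Every edge of `K` joins a vertex `≤ ⌊n/2⌋` to a vertex `> ⌊n/2⌋`. In an ordered copy of `F` in
`K`, an edge of `F` maps into an edge of `K`, so it has at most two vertices, which rules out (i).
The increasing vertex map sends the smaller endpoint of a two-element edge of `F` to the left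
side and the larger one to the right side; in a two-path `{a,b},{b,c}` the middle vertex `b`
would have to go to both sides, and for separated edges the right end of the first edge would lie
left of the left end of the second, which rules out (ii) and (iii). A two-element edge is mapped
onto an edge equal to its image, so a repeated one needs two equal edges of `K`, ruling out (iv).
As `K` is simple with `⌊n/2⌋·⌈n/2⌉` edges on `n` vertices, the bound on `ex_e` follows.
-/

lemma mem_vset {H : List (Finset ℕ)} {v : ℕ} : v ∈ vset H ↔ ∃ E ∈ H, v ∈ E := by
  induction H with
  | nil => simp [vset]
  | cons E H ih =>
    simp only [vset, List.foldr_cons] at ih ⊢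
    simp [ih]

lemma length_le_two_pow_nv {H : List (Finset ℕ)} (hH : HSimple H) : H.length ≤ 2 ^ nv H := by
  have hsub : H.toFinset ⊆ (vset H).powerset := fun E hE =>
    Finset.mem_powerset.mpr fun v hv => mem_vset.mpr ⟨E, List.mem_toFinset.mp hE, hv⟩
  calc H.length = H.toFinset.card := (List.toFinset_card_of_nodup hH.1).symm
    _ ≤ (vset H).powerset.card := Finset.card_le_card hsub
    _ = 2 ^ nv H := Finset.card_powerset _

lemma length_le_exE {F H : List (Finset ℕ)} {n : ℕ} (hH : HSimple H) (hF : ¬ HContains H F)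
    (hn : nv H ≤ n) : H.length ≤ exE F n := by
  refine le_csSup ⟨2 ^ n, ?_⟩ ⟨H, hH, hF, hn, rfl⟩
  rintro m ⟨H', hH', -, hn', rfl⟩
  exact (length_le_two_pow_nv hH').trans (Nat.pow_le_pow_right two_pos hn')

section Containment

variable {H F : List (Finset ℕ)}

lemma not_hContains_of_card_lt {k : ℕ} (hH : ∀ E ∈ H, E.card ≤ k) (hF : ∃ E ∈ F, k < E.card) :
    ¬ HContains H F := by
  rintro ⟨φ, f, hφ, -, hmap⟩
  obtain ⟨E, hE, hkE⟩ := hF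
  obtain ⟨i, rfl⟩ := List.get_of_mem hE
  have hsub : (F.get i).image φ ⊆ H.get (f i) := Finset.image_subset_iff.mpr (hmap i)
  have := (Finset.card_le_card hsub).trans (hH _ (List.get_mem H (f i)))
  rw [Finset.card_image_of_injective _ hφ.injective] at this
  omega

lemma not_hContains_of_get_eq {k : ℕ} (hHnodup : H.Nodup) (hH : ∀ E ∈ H, E.card ≤ k)
    {i j : Fin F.length} (hij : i ≠ j) (hFij : F.get i = F.get j) (hk : (F.get i).card = k) :
    ¬ HContains H F := by
  rintro ⟨φ, f, hφ, hf, hmap⟩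
  have himage : ∀ l, F.get l = F.get i → H.get (f l) = (F.get i).image φ := fun l hl =>
    (Finset.eq_of_subset_of_card_le (Finset.image_subset_iff.mpr (hl ▸ hmap l))
      (by rw [Finset.card_image_of_injective _ hφ.injective, hk]
          exact hH _ (List.get_mem H (f l)))).symm
  exact hij (hf (hHnodup.get_inj_iff.mp ((himage i rfl).trans (himage j hFij.symm).symm)))

end Containment

lemma exists_lt_of_two_le_card {α : Type*} [LinearOrder α] {s : Finset α} (hs : 2 ≤ s.card) :
    ∃ x ∈ s, ∃ y ∈ s, x < y := by
  obtain ⟨x, hx, y, hy, hxy⟩ := Finset.one_lt_card.mp hs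
  rcases hxy.lt_or_gt with h | h
  exacts [⟨x, hx, y, hy, h⟩, ⟨y, hy, x, hx, h⟩]

def IsSplitAt (m : ℕ) (H : List (Finset ℕ)) : Prop :=
  ∀ E ∈ H, ∃ p q, p ≤ m ∧ m < q ∧ E = {p, q}

namespace IsSplitAt

variable {m : ℕ} {H F : List (Finset ℕ)}

lemma card_le_two (hH : IsSplitAt m H) : ∀ E ∈ H, E.card ≤ 2 := by
  intro E hE
  obtain ⟨p, q, -, -, rfl⟩ := hH E hE
  exact Finset.card_le_two

lemma exists_cut_of_hContains (hH : IsSplitAt m H) (h : HContains H F) :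
    ∃ φ : ℕ → ℕ, StrictMono φ ∧ ∀ E ∈ F, ∀ x ∈ E, ∀ y ∈ E, x < y → φ x ≤ m ∧ m < φ y := by
  obtain ⟨φ, f, hφ, -, hmap⟩ := h
  refine ⟨φ, hφ, fun E hE x hx y hy hxy => ?_⟩
  obtain ⟨i, rfl⟩ := List.get_of_mem hE
  obtain ⟨p, q, hp, hq, hpq⟩ := hH _ (List.get_mem H (f i))
  have hφx := hmap i x hx
  have hφy := hmap i y hy
  have := hφ hxy
  rw [hpq, Finset.mem_insert, Finset.mem_singleton] at hφx hφy
  omega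

lemma not_hContains_of_path (hH : IsSplitAt m H) {a b c : ℕ} (hab : a < b) (hbc : b < c)
    (habF : ({a, b} : Finset ℕ) ∈ F) (hbcF : ({b, c} : Finset ℕ) ∈ F) : ¬ HContains H F := by
  intro h
  obtain ⟨φ, -, hcut⟩ := hH.exists_cut_of_hContains h
  have hb_right := (hcut _ habF a (by simp) b (by simp) hab).2
  have hb_left := (hcut _ hbcF b (by simp) c (by simp) hbc).1
  omega

lemma not_hContains_of_separated (hH : IsSplitAt m H) {E₁ E₂ : Finset ℕ} (hE₁ : E₁ ∈ F)
    (hE₂ : E₂ ∈ F) (h₁ : 2 ≤ E₁.card) (h₂ : 2 ≤ E₂.card) (hlt : ∀ x ∈ E₁, ∀ y ∈ E₂, x < y) :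
    ¬ HContains H F := by
  intro h
  obtain ⟨φ, hφ, hcut⟩ := hH.exists_cut_of_hContains h
  obtain ⟨x, hx, x', hx', hxx'⟩ := exists_lt_of_two_le_card h₁
  obtain ⟨y, hy, y', hy', hyy'⟩ := exists_lt_of_two_le_card h₂
  have hx'_right := (hcut E₁ hE₁ x hx x' hx' hxx').2
  have hy_left := (hcut E₂ hE₂ y hy y' hy' hyy').1
  have := hφ (hlt x' hx' y hy)
  omega

end IsSplitAt

def completeBipartite (n : ℕ) : List (Finset ℕ) :=
  (List.range (n / 2)).flatMap fun i =>
    (List.range ((n + 1) / 2)).map fun j => ({i + 1, n / 2 + j + 1} : Finset ℕ)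

lemma completeBipartite_eq_map_product (n : ℕ) :
    completeBipartite n = (List.range (n / 2) ×ˢ List.range ((n + 1) / 2)).map
      fun ij => ({ij.1 + 1, n / 2 + ij.2 + 1} : Finset ℕ) := by
  simp [completeBipartite, SProd.sprod, List.product, List.map_flatMap, Function.comp_def]

lemma pair_eq_pair_iff_of_split {m p q p' q' : ℕ} (hp : p ≤ m) (hq : m < q) (hp' : p' ≤ m)
    (hq' : m < q') : ({p, q} : Finset ℕ) = {p', q'} ↔ p = p' ∧ q = q' := by
  refine ⟨fun h => ?_, by rintro ⟨rfl, rfl⟩; rfl⟩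
  have hp_mem : p ∈ ({p', q'} : Finset ℕ) := h ▸ by simp
  have hq_mem : q ∈ ({p', q'} : Finset ℕ) := h ▸ by simp
  simp only [Finset.mem_insert, Finset.mem_singleton] at hp_mem hq_mem
  omega

lemma isSplitAt_completeBipartite (n : ℕ) : IsSplitAt (n / 2) (completeBipartite n) := by
  intro E hE
  simp only [completeBipartite_eq_map_product, List.mem_map, Prod.exists, List.mem_product,
    List.mem_range] at hE
  obtain ⟨i, j, ⟨hi, -⟩, rfl⟩ := hE
  exact ⟨i + 1, n / 2 + j + 1, by omega, by omega, rfl⟩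

lemma nodup_completeBipartite (n : ℕ) : (completeBipartite n).Nodup := by
  rw [completeBipartite_eq_map_product]
  refine List.Nodup.map_on ?_ (List.nodup_range.product List.nodup_range)
  rintro ⟨i, j⟩ hij ⟨i', j'⟩ hij' h
  simp only [List.mem_product, List.mem_range] at hij hij'
  have := (pair_eq_pair_iff_of_split (m := n / 2) (by omega) (by omega) (by omega) (by omega)).mp h
  simp only [Prod.mk.injEq]
  omega

lemma length_completeBipartite (n : ℕ) : (completeBipartite n).length = n / 2 * ((n + 1) / 2) := by
  simp [completeBipartite_eq_map_product, List.length_product]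

lemma nv_completeBipartite_le (n : ℕ) : nv (completeBipartite n) ≤ n := by
  have hsub : vset (completeBipartite n) ⊆ Finset.Icc 1 n := by
    intro v hv
    obtain ⟨E, hE, hvE⟩ := mem_vset.mp hv
    simp only [completeBipartite_eq_map_product, List.mem_map, Prod.exists, List.mem_product,
      List.mem_range] at hE
    obtain ⟨i, j, ⟨hi, hj⟩, rfl⟩ := hE
    simp only [Finset.mem_insert, Finset.mem_singleton] at hvE
    simp only [Finset.mem_Icc]
    omega
  simpa [nv] using Finset.card_le_card hsub

lemma hSimple_completeBipartite (n : ℕ) : HSimple (completeBipartite n) := by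
  refine ⟨nodup_completeBipartite n, fun E hE => ?_⟩
  obtain ⟨p, q, -, -, rfl⟩ := isSplitAt_completeBipartite n E hE
  exact Finset.insert_nonempty p {q}

theorem stmt17_general (F : List (Finset ℕ))
    (hcase : (∃ E ∈ F, 3 ≤ E.card) ∨
      (∃ i j : Fin F.length, (F.get i).card = 2 ∧ (F.get j).card = 2 ∧
        ∀ x ∈ F.get i, ∀ y ∈ F.get j, x < y) ∨
      (∃ a b c : ℕ, a < b ∧ b < c ∧ ({a, b} : Finset ℕ) ∈ F ∧ ({b, c} : Finset ℕ) ∈ F) ∨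
      (∃ i j : Fin F.length, i ≠ j ∧ F.get i = F.get j ∧ (F.get i).card = 2))
    (n : ℕ) (K : List (Finset ℕ))
    (hK : K = (List.range (n / 2)).flatMap fun i =>
      (List.range ((n + 1) / 2)).map fun j => ({i + 1, n / 2 + j + 1} : Finset ℕ)) :
    ¬ HContains K F ∧ n / 2 * ((n + 1) / 2) ≤ exE F n := by
  change K = completeBipartite n at hK
  subst hK
  have hsplit := isSplitAt_completeBipartite n
  have hfree : ¬ HContains (completeBipartite n) F := by
    rcases hcase with ⟨E, hE, hE3⟩ | ⟨i, j, hi, hj, hlt⟩ | ⟨a, b, c, hab, hbc, habF, hbcF⟩ |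
        ⟨i, j, hij, hFij, hi⟩
    · exact not_hContains_of_card_lt hsplit.card_le_two ⟨E, hE, hE3⟩
    · exact hsplit.not_hContains_of_separated (F.get_mem i) (F.get_mem j) hi.ge hj.ge hlt
    · exact hsplit.not_hContains_of_path hab hbc habF hbcF
    · exact not_hContains_of_get_eq (nodup_completeBipartite n) hsplit.card_le_two hij hFij hi
  refine ⟨hfree, ?_⟩
  rw [← length_completeBipartite n]
  exact length_le_exE (hSimple_completeBipartite n) hfree (nv_completeBipartite_le n)

/-- If the hypergraph `F` has an edge with at least 3 vertices, or two separated two-element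
edges, or a two-path `({a,b},{b,c})`, or a repeated two-element edge, then the complete
bipartite ordered graph with parts `[⌊n/2⌋]` and `[⌊n/2⌋+1,n]` is `F`-free, whence
`ex_e(F,n) ≥ ⌊n/2⌋·⌈n/2⌉`. -/
theorem stmt17 (F : List (Finset ℕ)) (hFne : ∀ E ∈ F, E.Nonempty)
    (hcase : (∃ E ∈ F, 3 ≤ E.card) ∨
      (∃ i j : Fin F.length, (F.get i).card = 2 ∧ (F.get j).card = 2 ∧
        ∀ x ∈ F.get i, ∀ y ∈ F.get j, x < y) ∨
      (∃ a b c : ℕ, a < b ∧ b < c ∧ ({a, b} : Finset ℕ) ∈ F ∧ ({b, c} : Finset ℕ) ∈ F) ∨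
      (∃ i j : Fin F.length, i ≠ j ∧ F.get i = F.get j ∧ (F.get i).card = 2))
    (n : ℕ) (K : List (Finset ℕ))
    (hK : K = (List.range (n / 2)).flatMap fun i =>
      (List.range ((n + 1) / 2)).map fun j => ({i + 1, n / 2 + j + 1} : Finset ℕ)) :
    ¬ HContains K F ∧ n / 2 * ((n + 1) / 2) ≤ exE F n :=
  stmt17_general F hcase n K hK
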